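/- For any constant c > e/√2, there is some n0 such that for all n ≥ n0 and all t ≥ 2: there exists a set 𝒯 = {T1, …, Tt} of trees on a common label set of size n such that min over all trees T on that label set of Σ_{Ti∈𝒯} d_LR(T, Ti) ≥ (t/4)(n − c√n). In particular, there are instances of AST-LR in which Ω(t(n − √n)) leaves need to be deleted. -/

import Mathlib

/-!
Common framework: rooted binary trees with leaves bijectively labeled by a
finite label set, leaf removal, restriction, the leaf-removal distance `d_LR`,
compatibility, leaf-disagreements, triplets, LPR moves, etc.
-/

universe u

/-- A rooted binary tree whose leaves carry labels from `α`. -/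
inductive LTree (α : Type u) : Type u where
  | leaf : α → LTree α
  | node : LTree α → LTree α → LTree α

namespace LTree

variable {α : Type u} [DecidableEq α]

/-- The set of leaf labels of a tree. -/
def labels : LTree α → Finset α
  | leaf a => {a}
  | node l r => labels l ∪ labels r

/-- A tree is `Good` when its leaves carry pairwise distinct labels
(i.e. the leaves are bijectively labeled). -/
def Good : LTree α → Prop
  | leaf _ => True
  | node l r => Good l ∧ Good r ∧ Disjoint (labels l) (labels r)

/-- `T` is a (rooted binary, uniquely leaf-labeled) tree on label set `𝒳`. -/
def IsTreeOn (T : LTree α) (𝒳 : Finset α) : Prop :=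
  Good T ∧ labels T = 𝒳

/-- Equality of rooted trees: children of a node are unordered. -/
inductive Iso : LTree α → LTree α → Prop
  | leaf (a : α) : Iso (leaf a) (leaf a)
  | node {l₁ r₁ l₂ r₂ : LTree α} :
      Iso l₁ l₂ → Iso r₁ r₂ → Iso (node l₁ r₁) (node l₂ r₂)
  | swap {l₁ r₁ l₂ r₂ : LTree α} :
      Iso l₁ r₂ → Iso r₁ l₂ → Iso (node l₁ r₁) (node l₂ r₂)

/-- Equality of possibly empty trees (`none` is the empty tree). -/
def OptIso : Option (LTree α) → Option (LTree α) → Prop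
  | none, none => True
  | some t₁, some t₂ => Iso t₁ t₂
  | _, _ => False

/-- Restriction `T|_S`: keep exactly the leaves with labels in `S`, suppressing
the resulting degree-two vertices and degree-one roots; the result is `none`
when no leaf survives. -/
def restrict : LTree α → Finset α → Option (LTree α)
  | leaf a, S => if a ∈ S then some (leaf a) else none
  | node l r, S =>
    match restrict l S, restrict r S with
    | some l', some r' => some (node l' r')
    | some l', none => some l'
    | none, some r' => some r'
    | none, none => none

/-- `T − X`: remove from `T` every leaf whose label lies in `X`. -/
def remove (T : LTree α) (X : Finset α) : Option (LTree α) :=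
  restrict T (labels T \ X)

/-- The leaf-removal distance `d_LR(T₁,T₂)`: the minimum number of labels
whose removal makes the two trees equal. -/
noncomputable def dLR (T₁ T₂ : LTree α) : ℕ :=
  sInf {n | ∃ X : Finset α, X ⊆ labels T₁ ∪ labels T₂ ∧ X.card = n ∧
    OptIso (remove T₁ X) (remove T₂ X)}

def labelsO : Option (LTree α) → Finset α
  | none => ∅
  | some t => labels t

def GoodO : Option (LTree α) → Prop
  | none => True
  | some t => Good t

def restrictO : Option (LTree α) → Finset α → Option (LTree α)
  | none, _ => none
  | some t, S => restrict t S

/-- A family of (possibly empty) trees is compatible if there is a single tree,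
on the union of their label sets, which displays all of them. -/
def CompatibleFamO {ι : Type*} (f : ι → Option (LTree α)) : Prop :=
  ∃ TO : Option (LTree α), GoodO TO ∧
    (↑(labelsO TO) : Set α) = (⋃ i, ↑(labelsO (f i))) ∧
    ∀ i, OptIso (restrictO TO (labelsO (f i))) (f i)

/-- A family of trees is compatible if a single tree displays all of them. -/
def CompatibleFam {ι : Type*} (𝒯 : ι → LTree α) : Prop :=
  CompatibleFamO fun i => some (𝒯 i)

/-- `X` is a leaf-disagreement for the family `𝒯`: removing `X i` from `𝒯 i`
yields a compatible family. -/
def IsLeafDisagreement {ι : Type*} (𝒯 : ι → LTree α) (X : ι → Finset α) : Prop :=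
  CompatibleFamO fun i => remove (𝒯 i) (X i)

/-- `X'` is a label-disagreement for the family `𝒯`. -/
def IsLabelDisagreement {ι : Type*} (𝒯 : ι → LTree α) (X' : Finset α) : Prop :=
  CompatibleFamO fun i => remove (𝒯 i) X'

/-- `MASTRL 𝒯`: the minimum size of a leaf-disagreement for `𝒯`. -/
noncomputable def MASTRL {t : ℕ} (𝒯 : Fin t → LTree α) : ℕ :=
  sInf {v | ∃ X : Fin t → Finset α, (∀ i, X i ⊆ labels (𝒯 i)) ∧
    (∑ i, (X i).card) = v ∧ IsLeafDisagreement 𝒯 X}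

/-- The triplet `ab|c` (as a tree). -/
def tripletTree (a b c : α) : LTree α := node (node (leaf a) (leaf b)) (leaf c)

/-- A rooted triplet: a tree with exactly three (distinctly labeled) leaves. -/
def IsTriplet (R : LTree α) : Prop := Good R ∧ (labels R).card = 3

/-- `ab|c` is a triplet of `T`, i.e. `T|_{a,b,c} = ab|c`. -/
def IsTripletOf (T : LTree α) (a b c : α) : Prop :=
  OptIso (restrict T {a, b, c}) (some (tripletTree a b c))

/-- `tr(T)`: the triplet decomposition of `T`. -/
def trSet (T : LTree α) : Set (LTree α) :=
  {R | ∃ a b c : α, R = tripletTree a b c ∧ IsTripletOf T a b c}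

/-- A set of trees is compatible: some tree on the union of the label sets
displays every member. -/
def CompatibleSet (S : Set (LTree α)) : Prop :=
  ∃ TO : Option (LTree α), GoodO TO ∧
    (↑(labelsO TO) : Set α) = (⋃ R ∈ S, ↑(labels R)) ∧
    ∀ R ∈ S, OptIso (restrictO TO (labels R)) (some R)

/-- `MINRTI ℛ`: the minimum number of triplets to delete from `ℛ` so that the
remaining triplets are compatible. -/
noncomputable def MINRTI {t : ℕ} (R : Fin t → LTree α) : ℕ :=
  sInf {m | ∃ s : Finset (Fin t), s.card = m ∧
    CompatibleFam (fun i : {i : Fin t // i ∉ s} => R i.1)}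

/-- Graft the leaf `x` at the position (edge) addressed by `p` in `T`.
The empty address grafts `x` above the root of `T` (the `⊥` case); the address
of an internal/leaf vertex `v` grafts `x` on the edge between `v` and its
parent.  `none` when the address is invalid. -/
def graftAt (x : α) : LTree α → List Bool → Option (LTree α)
  | T, [] => some (node (leaf x) T)
  | leaf _, _ :: _ => none
  | node l r, b :: p =>
    if b then (graftAt x l p).map (fun l' => node l' r)
    else (graftAt x r p).map (fun r' => node l r')

/-- `T'` is obtained from `T` by a single LPR (leaf prune-and-regraft) move on
the leaf `x`: prune `x` from `T` and regraft it, either on an edge of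
`T − {x}` or above its root. -/
def LPRStep (x : α) (T T' : LTree α) : Prop :=
  (remove T {x} = none ∧ T' = leaf x) ∨
  ∃ T₀ p, remove T {x} = some T₀ ∧ graftAt x T₀ p = some T'

/-- `TurnsInto L T T'`: the LPR sequence with (ordered) leaf list `L` turns
`T` into `T'`. -/
inductive TurnsInto : List α → LTree α → LTree α → Prop
  | nil {T T' : LTree α} : Iso T T' → TurnsInto [] T T'
  | cons {x : α} {xs : List α} {T T'' T' : LTree α} :
      LPRStep x T T'' → TurnsInto xs T'' T' → TurnsInto (x :: xs) T T'

/-- `confset(T₁,T₂)`: the collection of 3-label sets `{a,b,c}` such that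
`T₁` contains a triplet on `{a,b,c}` conflicting with a triplet of `T₂`. -/
def confset (T₁ T₂ : LTree α) : Set (Finset α) :=
  {s | ∃ a b c : α, s = {a, b, c} ∧ IsTripletOf T₁ a b c ∧
    (IsTripletOf T₂ a c b ∨ IsTripletOf T₂ b c a)}

/-- `X` is a minimal disagreement between `T₁` and `T₂`. -/
def MinimalDisagreement (T₁ T₂ : LTree α) (X : Finset α) : Prop :=
  X ⊆ labels T₁ ∪ labels T₂ ∧
  OptIso (remove T₁ X) (remove T₂ X) ∧
  ∀ X' ⊂ X, ¬ OptIso (remove T₁ X') (remove T₂ X')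

/-- `u` is (the rooted subtree hanging at) a node of `T`. -/
inductive IsSubtree : LTree α → LTree α → Prop
  | refl (T : LTree α) : IsSubtree T T
  | left {u l r : LTree α} : IsSubtree u l → IsSubtree u (node l r)
  | right {u l r : LTree α} : IsSubtree u r → IsSubtree u (node l r)

/-- `u` is the least common ancestor in `T` of the labels in `Z`. -/
def IsLCA (T : LTree α) (Z : Finset α) (u : LTree α) : Prop :=
  IsSubtree u T ∧ Z ⊆ labels u ∧
    ∀ w, IsSubtree w T → Z ⊆ labels w → IsSubtree u w

end LTree

open LTree

/-!
Let `A` and `B` be the caterpillars on a label set `𝒳` read in opposite orders. On any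
`S ⊆ 𝒳` with `|S| ≥ 3` they restrict to the caterpillars on `S` in opposite orders, whose
top leaves differ, so `d_LR(A, B) ≥ n - 2`. By the triangle inequality every tree `T` on `𝒳`
satisfies `d_LR(T, A) + d_LR(T, B) ≥ n - 2`, so the family of `⌊t/2⌋` copies of `A` and
`⌈t/2⌉` copies of `B` forces `∑ᵢ d_LR(T, Tᵢ) ≥ ⌊t/2⌋ (n - 2)`. This is at least
`(t/4)(n - c√n)` as soon as `c √n ≥ 2`, e.g. for `n ≥ 4`, since `c > e/√2 > 1`.
-/

namespace LTree

variable {α : Type u}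

theorem Iso.symm {u v : LTree α} (h : Iso u v) : Iso v u := by
  induction h with
  | leaf a => exact Iso.leaf a
  | node _ _ ihl ihr => exact Iso.node ihl ihr
  | swap _ _ ihl ihr => exact Iso.swap ihr ihl

theorem Iso.trans {u v w : LTree α} (h₁ : Iso u v) (h₂ : Iso v w) : Iso u w := by
  induction h₁ generalizing w with
  | leaf a => exact h₂
  | node _ _ ihl ihr =>
    cases h₂ with
    | node hl hr => exact Iso.node (ihl hl) (ihr hr)
    | swap hl hr => exact Iso.swap (ihl hl) (ihr hr)
  | swap _ _ ihl ihr =>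
    cases h₂ with
    | node hl hr => exact Iso.swap (ihl hr) (ihr hl)
    | swap hl hr => exact Iso.node (ihl hr) (ihr hl)

theorem OptIso.symm : ∀ {u v : Option (LTree α)}, OptIso u v → OptIso v u
  | none, none, _ => trivial
  | some _, some _, h => Iso.symm h

theorem OptIso.trans : ∀ {u v w : Option (LTree α)}, OptIso u v → OptIso v w → OptIso u w
  | none, none, none, _, _ => trivial
  | some _, some _, some _, h₁, h₂ => Iso.trans h₁ h₂

/-- The caterpillar whose top leaf is `x`, followed downwards by the leaves of `l`. -/
def cat : α → List α → LTree α
  | x, [] => leaf x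
  | x, y :: l => node (cat y l) (leaf x)

def catL : List α → Option (LTree α)
  | [] => none
  | x :: l => some (cat x l)

theorem head?_eq_of_optIso_catL {l l' : List α} (hl : 3 ≤ l.length) (hl' : 3 ≤ l'.length)
    (h : OptIso (catL l) (catL l')) : l.head? = l'.head? := by
  match l, l', hl, hl' with
  | x :: y :: z :: m, x' :: y' :: z' :: m', _, _ =>
    simp only [catL, OptIso, cat] at h
    cases h with
    | node _ hx => cases hx; rfl
    | swap hl _ => cases hl

theorem not_optIso_catL_reverse {l : List α} (hnd : l.Nodup) (hl : 3 ≤ l.length) :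
    ¬ OptIso (catL l.reverse) (catL l) := by
  intro h
  have hhead := head?_eq_of_optIso_catL (by simpa using hl) hl h
  match l, hnd with
  | x :: y :: m, hnd =>
    rw [List.head?_reverse, List.getLast?_cons_cons, List.head?_cons] at hhead
    exact (List.nodup_cons.mp hnd).1 (List.mem_of_getLast? hhead)

variable [DecidableEq α]

theorem Iso.optIso_restrict {u v : LTree α} (h : Iso u v) (S : Finset α) :
    OptIso (restrict u S) (restrict v S) := by
  induction h with
  | leaf a =>
    simp only [restrict]
    split
    · exact Iso.leaf a
    · trivial
  | @node l₁ r₁ l₂ r₂ _ _ ihl ihr =>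
    simp only [restrict]
    generalize restrict l₁ S = a₁, restrict l₂ S = a₂, restrict r₁ S = b₁,
      restrict r₂ S = b₂ at ihl ihr
    cases a₁ <;> cases a₂ <;> cases b₁ <;> cases b₂ <;> simp only [OptIso] at ihl ihr ⊢ <;>
      first | trivial | exact ihl | exact ihr | exact Iso.node ihl ihr
  | @swap l₁ r₁ l₂ r₂ _ _ ihl ihr =>
    simp only [restrict]
    generalize restrict l₁ S = a₁, restrict l₂ S = a₂, restrict r₁ S = b₁,
      restrict r₂ S = b₂ at ihl ihr
    cases a₁ <;> cases a₂ <;> cases b₁ <;> cases b₂ <;> simp only [OptIso] at ihl ihr ⊢ <;>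
      first | trivial | exact ihl | exact ihr | exact Iso.swap ihl ihr

theorem OptIso.restrictO {u v : Option (LTree α)} (h : OptIso u v) (S : Finset α) :
    OptIso (restrictO u S) (restrictO v S) := by
  match u, v with
  | none, none => trivial
  | some _, some _ => exact Iso.optIso_restrict h S

theorem restrict_empty : ∀ T : LTree α, restrict T ∅ = none
  | leaf a => by simp [restrict]
  | node l r => by simp only [restrict, restrict_empty l, restrict_empty r]

theorem restrictO_restrict : ∀ (T : LTree α) (S₁ S₂ : Finset α),
    restrictO (restrict T S₁) S₂ = restrict T (S₁ ∩ S₂)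
  | leaf a, S₁, S₂ => by
    by_cases h₁ : a ∈ S₁ <;> by_cases h₂ : a ∈ S₂ <;> simp [restrict, restrictO, h₁, h₂]
  | node l r, S₁, S₂ => by
    rw [restrict, restrict, ← restrictO_restrict l, ← restrictO_restrict r]
    cases restrict l S₁ <;> cases restrict r S₁ <;> simp only [restrictO, restrict] <;>
      split <;> simp_all

theorem remove_union (T : LTree α) (X Y : Finset α) :
    remove T (X ∪ Y) = restrictO (remove T X) (labels T \ Y) := by
  rw [remove, remove, restrictO_restrict, Finset.sdiff_union_distrib]

theorem OptIso.remove_union {T₁ T₂ : LTree α} (hlab : labels T₁ = labels T₂)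
    {X : Finset α} (h : OptIso (remove T₁ X) (remove T₂ X)) (Y : Finset α) :
    OptIso (remove T₁ (X ∪ Y)) (remove T₂ (X ∪ Y)) := by
  rw [LTree.remove_union, LTree.remove_union, hlab]
  exact h.restrictO _

theorem dLR_le_card {T₁ T₂ : LTree α} {X : Finset α} (hX : X ⊆ labels T₁ ∪ labels T₂)
    (h : OptIso (remove T₁ X) (remove T₂ X)) : dLR T₁ T₂ ≤ X.card := by
  unfold dLR
  exact Nat.sInf_le (by exact ⟨X, hX, rfl, h⟩)

theorem exists_card_eq_dLR (T₁ T₂ : LTree α) :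
    ∃ X : Finset α, X ⊆ labels T₁ ∪ labels T₂ ∧ X.card = dLR T₁ T₂ ∧
      OptIso (remove T₁ X) (remove T₂ X) := by
  refine Nat.sInf_mem (s := {n | ∃ X : Finset α, X ⊆ labels T₁ ∪ labels T₂ ∧ X.card = n ∧
    OptIso (remove T₁ X) (remove T₂ X)}) ⟨_, labels T₁ ∪ labels T₂, subset_rfl, rfl, ?_⟩
  rw [remove, remove, Finset.sdiff_eq_empty_iff_subset.mpr Finset.subset_union_left,
    Finset.sdiff_eq_empty_iff_subset.mpr Finset.subset_union_right, restrict_empty,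
    restrict_empty]
  trivial

theorem dLR_comm (T₁ T₂ : LTree α) : dLR T₁ T₂ = dLR T₂ T₁ := by
  have key : ∀ T₁ T₂ : LTree α, dLR T₁ T₂ ≤ dLR T₂ T₁ := fun T₁ T₂ => by
    obtain ⟨X, hX, hcard, h⟩ := exists_card_eq_dLR T₂ T₁
    exact hcard ▸ dLR_le_card (by rwa [Finset.union_comm]) h.symm
  exact (key T₁ T₂).antisymm (key T₂ T₁)

theorem dLR_triangle {T₁ T₂ T₃ : LTree α} (h₁₂ : labels T₁ = labels T₂)
    (h₂₃ : labels T₂ = labels T₃) : dLR T₁ T₃ ≤ dLR T₁ T₂ + dLR T₂ T₃ := by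
  obtain ⟨X, hX, hXcard, hX₁₂⟩ := exists_card_eq_dLR T₁ T₂
  obtain ⟨Y, hY, hYcard, hY₂₃⟩ := exists_card_eq_dLR T₂ T₃
  have h₁₃ : OptIso (remove T₁ (X ∪ Y)) (remove T₃ (X ∪ Y)) := by
    refine (hX₁₂.remove_union h₁₂ Y).trans ?_
    rw [Finset.union_comm]
    exact hY₂₃.remove_union h₂₃ X
  have hXY : X ∪ Y ⊆ labels T₁ ∪ labels T₃ := by
    rw [← h₁₂, Finset.union_self] at hX
    rw [h₂₃, Finset.union_self] at hY
    rw [← h₂₃, ← h₁₂, Finset.union_self]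
    exact Finset.union_subset hX (h₁₂ ▸ h₂₃ ▸ hY)
  calc dLR T₁ T₃ ≤ (X ∪ Y).card := dLR_le_card hXY h₁₃
    _ ≤ X.card + Y.card := Finset.card_union_le X Y
    _ = dLR T₁ T₂ + dLR T₂ T₃ := by rw [hXcard, hYcard]

theorem card_le_dLR_add_two {A B : LTree α} {𝒳 : Finset α} (hA : labels A = 𝒳)
    (hB : labels B = 𝒳)
    (hdis : ∀ S ⊆ 𝒳, 3 ≤ S.card → ¬ OptIso (restrict A S) (restrict B S)) :
    𝒳.card ≤ dLR A B + 2 := by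
  obtain ⟨X, hX, hcard, h⟩ := exists_card_eq_dLR A B
  rw [hA, hB, Finset.union_self] at hX
  rw [remove, remove, hA, hB] at h
  have hsmall : (𝒳 \ X).card < 3 := by
    by_contra! hbig
    exact hdis _ Finset.sdiff_subset hbig h
  rw [Finset.card_sdiff_of_subset hX] at hsmall
  omega

theorem labels_cat : ∀ (x : α) (l : List α), labels (cat x l) = (x :: l).toFinset
  | x, [] => by simp [cat, labels]
  | x, y :: l => by
    rw [cat, labels, labels_cat y l, labels, List.toFinset_cons, List.toFinset_cons,
      List.toFinset_cons, Finset.union_comm, Finset.insert_eq, Finset.insert_eq]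

theorem good_cat : ∀ (x : α) (l : List α), (x :: l).Nodup → Good (cat x l)
  | x, [], _ => trivial
  | x, y :: l, h => by
    refine ⟨good_cat y l h.of_cons, trivial, ?_⟩
    rw [labels_cat, labels, Finset.disjoint_singleton_right, List.mem_toFinset]
    exact (List.nodup_cons.mp h).1

theorem restrict_cat (S : Finset α) : ∀ (x : α) (l : List α),
    restrict (cat x l) S = catL ((x :: l).filter (· ∈ S))
  | x, [] => by by_cases hx : x ∈ S <;> simp [cat, restrict, catL, hx]
  | x, y :: l => by
    have ih := restrict_cat S y l
    by_cases hx : x ∈ S <;> cases hf : (y :: l).filter (· ∈ S) <;>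
      simp [cat, restrict, ih, hf, catL, hx]

theorem exists_isTreeOn_card_le_dLR_add_two (𝒳 : Finset α) (h𝒳 : 𝒳.Nonempty) :
    ∃ A B : LTree α, IsTreeOn A 𝒳 ∧ IsTreeOn B 𝒳 ∧ 𝒳.card ≤ dLR A B + 2 := by
  obtain ⟨x, xs, hL⟩ := List.exists_cons_of_ne_nil (Finset.toList_eq_nil.not.mpr h𝒳.ne_empty)
  obtain ⟨y, ys, hR⟩ := List.exists_cons_of_ne_nil
    (List.reverse_eq_nil_iff.not.mpr (Finset.toList_eq_nil.not.mpr h𝒳.ne_empty))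
  have hnd := 𝒳.nodup_toList
  have hA : IsTreeOn (cat y ys) 𝒳 := by
    refine ⟨good_cat y ys (hR ▸ List.nodup_reverse.mpr hnd), ?_⟩
    rw [labels_cat, ← hR, List.toFinset_reverse, Finset.toList_toFinset]
  have hB : IsTreeOn (cat x xs) 𝒳 :=
    ⟨good_cat x xs (hL ▸ hnd), by rw [labels_cat, ← hL, Finset.toList_toFinset]⟩
  refine ⟨_, _, hA, hB, card_le_dLR_add_two hA.2 hB.2 fun S hS h3 h => ?_⟩
  have hfilter : (𝒳.toList.filter (· ∈ S)).length = S.card := by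
    rw [← List.toFinset_card_of_nodup (hnd.filter _), List.toFinset_filter,
      Finset.toList_toFinset]
    simp only [decide_eq_true_eq, Finset.filter_mem_eq_inter, Finset.inter_eq_right.mpr hS]
  rw [restrict_cat, restrict_cat, ← hR, ← hL, List.filter_reverse] at h
  exact not_optIso_catL_reverse (hnd.filter _) (hfilter ▸ h3) h

end LTree

theorem half_mul_add_le_sum_ite (t a b : ℕ) :
    t / 2 * (a + b) ≤ ∑ i : Fin t, if (i : ℕ) < t / 2 then a else b := by
  rw [Finset.sum_ite, Finset.sum_const, Finset.sum_const, Fin.card_filter_val_lt,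
    Finset.filter_not, Finset.card_sdiff_of_subset (Finset.filter_subset _ _),
    Fin.card_filter_val_lt, Finset.card_univ, Fintype.card_fin, smul_eq_mul, smul_eq_mul]
  rw [min_eq_right (Nat.div_le_self t 2), Nat.mul_add]
  gcongr
  omega

theorem one_le_exp_one_div_sqrt_two : 1 ≤ Real.exp 1 / Real.sqrt 2 := by
  rw [one_le_div (by positivity)]
  calc Real.sqrt 2 ≤ 2 := by rw [Real.sqrt_le_left (by norm_num)]; norm_num
    _ ≤ Real.exp 1 := by linarith [Real.add_one_le_exp 1]

theorem div_four_mul_sub_mul_sqrt_le {t n d : ℕ} {c : ℝ} (ht : 2 ≤ t) (hn : 4 ≤ n)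
    (hc : 1 ≤ c) (hd : n ≤ d + 2) :
    (t : ℝ) / 4 * (n - c * Real.sqrt n) ≤ (t / 2 : ℕ) * (d : ℝ) := by
  have hsqrt : 2 ≤ c * Real.sqrt n := by
    have : 2 ≤ Real.sqrt n := Real.le_sqrt_of_sq_le (by exact_mod_cast (by omega : 2 ^ 2 ≤ n))
    nlinarith
  have hhalf : (t : ℝ) / 4 ≤ (t / 2 : ℕ) := by
    rw [div_le_iff₀ (by norm_num)]
    exact_mod_cast (by omega : t ≤ t / 2 * 4)
  have hn2 : (0 : ℝ) ≤ n - 2 := by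
    rw [sub_nonneg]; exact_mod_cast (by omega : 2 ≤ n)
  calc (t : ℝ) / 4 * (n - c * Real.sqrt n) ≤ (t : ℝ) / 4 * (n - 2) := by gcongr
    _ ≤ (t / 2 : ℕ) * ((n : ℝ) - 2) := by gcongr
    _ ≤ (t / 2 : ℕ) * (d : ℝ) := by
        gcongr
        rw [sub_le_iff_le_add]
        exact_mod_cast hd

/-- Corollary 1 of the paper.  For any constant `c > e/√2` there
is `n₀` such that for all `n ≥ n₀` and all `t ≥ 2` there exists an instance
`𝒯 = {T₁,…,T_t}` on a label set of size `n` with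
`min_T ∑ᵢ d_LR(T,Tᵢ) ≥ (t/4)(n − c√n)`; in particular there are AST-LR instances
requiring `Ω(t(n − √n))` leaf deletions. -/
theorem worst_case_astlr_instances {α : Type u} [DecidableEq α] [Infinite α] :
    ∀ c : ℝ, Real.exp 1 / Real.sqrt 2 < c →
    ∃ n₀ : ℕ, ∀ n : ℕ, n₀ ≤ n → ∀ t : ℕ, 2 ≤ t →
    ∃ (𝒳 : Finset α) (𝒯 : Fin t → LTree α),
      𝒳.card = n ∧ (∀ i, IsTreeOn (𝒯 i) 𝒳) ∧
      ∀ T : LTree α, IsTreeOn T 𝒳 →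
        (t : ℝ) / 4 * ((n : ℝ) - c * Real.sqrt n) ≤ ∑ i, (dLR T (𝒯 i) : ℝ) := by
  intro c hc
  refine ⟨4, fun n hn t ht => ?_⟩
  obtain ⟨𝒳, h𝒳⟩ := Infinite.exists_subset_card_eq α n
  obtain ⟨A, B, hA, hB, hAB⟩ :=
    exists_isTreeOn_card_le_dLR_add_two 𝒳 (Finset.card_pos.mp (by omega))
  refine ⟨𝒳, fun i => if (i : ℕ) < t / 2 then A else B, h𝒳,
    fun i => by dsimp only; split <;> assumption, fun T hT => ?_⟩
  have hpair : n ≤ dLR T A + dLR T B + 2 := by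
    have := dLR_triangle (hA.2.trans hT.2.symm) (hT.2.trans hB.2.symm) (T₂ := T)
    rw [dLR_comm A T] at this
    omega
  have hsum : t / 2 * (dLR T A + dLR T B) ≤
      ∑ i : Fin t, dLR T (if (i : ℕ) < t / 2 then A else B) := by
    simpa only [apply_ite (dLR T)] using half_mul_add_le_sum_ite t (dLR T A) (dLR T B)
  calc (t : ℝ) / 4 * ((n : ℝ) - c * Real.sqrt n)
      ≤ (t / 2 : ℕ) * ((dLR T A + dLR T B : ℕ) : ℝ) :=
        div_four_mul_sub_mul_sqrt_le ht hn (one_le_exp_one_div_sqrt_two.trans hc.le) hpair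
    _ ≤ ∑ i : Fin t, (dLR T (if (i : ℕ) < t / 2 then A else B) : ℝ) := by
        exact_mod_cast hsum
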